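/- arXiv:math/0605098 — 4 statements merged into one kernel-verified Lean document; each statement's English description precedes it below -/
import Mathlib

section
/- The minimum squared Euclidean norm of a nonzero vector in the Construction A lattice A_p(C) equals min(d^2, p^2), where d is the minimum norm of the code C (the minimum over nonzero codewords x of the Euclidean norm of the integer representative of x with coordinates in [-(p-1)/2, (p-1)/2]). -/
lemma aux_sq_valMinAbs_le (p : ℕ) [NeZero p] (a : ℤ) :
    ((a : ZMod p)).valMinAbs ^ 2 ≤ a ^ 2 := by
  set v := ((a : ZMod p)).valMinAbs with hv
  have hva : ((v : ℤ) : ZMod p) = (a : ZMod p) := ZMod.coe_valMinAbs _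
  have hdvd : (p : ℤ) ∣ a - v := by
    rwa [← ZMod.intCast_zmod_eq_zero_iff_dvd, Int.cast_sub, sub_eq_zero, eq_comm]
  have hv2 : 2 * v.natAbs ≤ p := by
    have := ZMod.natAbs_valMinAbs_le ((a : ZMod p))
    omega
  rcases eq_or_ne a v with h | h
  · rw [h]
  · have hdvd' : (p : ℤ) ∣ |a - v| := (dvd_abs _ _).mpr hdvd
    have hp : (p : ℤ) ≤ |a - v| := Int.le_of_dvd (abs_pos.mpr (sub_ne_zero.mpr h)) hdvd'
    have htri : |a - v| ≤ |a| + |v| := abs_sub _ _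
    have hvabs : 2 * |v| ≤ (p : ℤ) := by
      rw [Int.abs_eq_natAbs]
      exact_mod_cast hv2
    have hle : |v| ≤ |a| := by linarith
    calc v ^ 2 = |v| ^ 2 := (sq_abs v).symm
      _ ≤ |a| ^ 2 := pow_le_pow_left₀ (abs_nonneg v) hle 2
      _ = a ^ 2 := sq_abs a

/-- the minimum squared Euclidean norm of a nonzero vector of the
Construction A lattice A_p(C) equals min(d², p²), where d² = D is the minimum
squared norm (via integer representatives in [-(p-1)/2,(p-1)/2]) of a nonzero
codeword of C. -/
theorem constructionA_min_norm (p n : ℕ) (hp : p.Prime) (hodd : Odd p)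
    (C : Submodule (ZMod p) (Fin n → ZMod p)) (hC : C ≠ ⊥) (D : ℤ)
    (hD : IsLeast {s : ℤ | ∃ c, c ∈ C ∧ c ≠ 0 ∧ s = ∑ i, ((c i).valMinAbs) ^ 2} D) :
    IsLeast {s : ℤ | ∃ x : Fin n → ℤ, (fun i => ((x i : ZMod p))) ∈ C ∧ x ≠ 0 ∧
        s = ∑ i, (x i) ^ 2} (min D ((p : ℤ) ^ 2)) := by
  haveI : NeZero p := ⟨hp.ne_zero⟩
  obtain ⟨c, hcC, hcne, hcsum⟩ := hD.1
  obtain ⟨i0, hi0⟩ : ∃ i, c i ≠ 0 := by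
    by_contra h
    push_neg at h
    exact hcne (funext h)
  constructor
  · -- membership
    rcases le_or_gt D ((p : ℤ) ^ 2) with hle | hlt
    · rw [min_eq_left hle]
      refine ⟨fun i => (c i).valMinAbs, ?_, ?_, ?_⟩
      · have : (fun i => (((c i).valMinAbs : ℤ) : ZMod p)) = c := by
          funext i
          simp [ZMod.coe_valMinAbs]
        rwa [this]
      · intro h
        apply hi0
        have := congrFun h i0
        simp only [Pi.zero_apply] at this
        rwa [← ZMod.valMinAbs_eq_zero]
      · exact hcsum
    · rw [min_eq_right hlt.le]
      refine ⟨fun i => if i = i0 then (p : ℤ) else 0, ?_, ?_, ?_⟩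
      · have : (fun i => (((if i = i0 then (p : ℤ) else 0) : ℤ) : ZMod p)) = 0 := by
          funext i
          by_cases h : i = i0 <;> simp [h]
        rw [this]
        exact C.zero_mem
      · intro h
        have := congrFun h i0
        simp only [if_pos rfl, Pi.zero_apply] at this
        exact (Nat.cast_ne_zero.mpr hp.ne_zero : (p : ℤ) ≠ 0) this
      · rw [Finset.sum_eq_single i0]
        · simp
        · intro b _ hb; simp [hb]
        · intro h; exact absurd (Finset.mem_univ i0) h
  · -- lower bound
    rintro s ⟨x, hxC, hxne, rfl⟩
    by_cases h : (fun i => ((x i : ZMod p))) = 0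
    · -- all coords divisible by p
      obtain ⟨j, hj⟩ : ∃ j, x j ≠ 0 := by
        by_contra hc
        push_neg at hc
        exact hxne (funext hc)
      have hdvd : (p : ℤ) ∣ x j := by
        have := congrFun h j
        simp only [Pi.zero_apply] at this
        exact (ZMod.intCast_zmod_eq_zero_iff_dvd _ _).mp this
      have h1 : (p : ℤ) ≤ |x j| := Int.le_of_dvd (abs_pos.mpr hj) ((dvd_abs _ _).mpr hdvd)
      have h2 : (p : ℤ) ^ 2 ≤ (x j) ^ 2 := by
        rw [← sq_abs (x j)]
        exact pow_le_pow_left₀ (by positivity) h1 2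
      have h3 : (x j) ^ 2 ≤ ∑ i, (x i) ^ 2 :=
        Finset.single_le_sum (fun i _ => sq_nonneg (x i)) (Finset.mem_univ j)
      exact le_trans (min_le_right _ _) (le_trans h2 h3)
    · have hDle : D ≤ ∑ i, ((x i : ZMod p)).valMinAbs ^ 2 :=
        hD.2 ⟨fun i => (x i : ZMod p), hxC, h, rfl⟩
      have hsum : ∑ i, ((x i : ZMod p)).valMinAbs ^ 2 ≤ ∑ i, (x i) ^ 2 :=
        Finset.sum_le_sum (fun i _ => aux_sq_valMinAbs_le p (x i))
      exact le_trans (min_le_left _ _) (le_trans hDle hsum)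
end

section
/- Let C_rand be the random double circulant code with parity check matrix [I_q | A(a)], a uniform in (F_p)^q. For nonzero x = (x_L, x_R) ∈ (F_p)^{2q}: the probability that x ∈ C_rand equals 1/|C(x_R)| if x_L ∈ C(x_R), and equals 0 if x_L ∉ C(x_R). -/
open Polynomial

namespace DCCAux

variable (p q : ℕ) [Fact p.Prime] [NeZero q]

noncomputable def mk : (ZMod p)[X] →+* (ZMod p)[X] ⧸ Ideal.span {(X : (ZMod p)[X]) ^ q - 1} :=
  Ideal.Quotient.mk _

noncomputable def phi (u : ZMod q → ZMod p) :
    (ZMod p)[X] ⧸ Ideal.span {(X : (ZMod p)[X]) ^ q - 1} :=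
  mk p q (∑ k : ZMod q, C (u k) * X ^ k.val)

variable {p q}

lemma mk_X_pow_q : mk p q (X ^ q) = 1 := by
  have h : mk p q ((X : (ZMod p)[X]) ^ q - 1) = 0 :=
    Ideal.Quotient.eq_zero_iff_mem.mpr (Ideal.subset_span (Set.mem_singleton _))
  have h2 : mk p q (X ^ q) - mk p q 1 = 0 := by rw [← map_sub]; exact h
  have := sub_eq_zero.mp h2
  simpa using this

lemma mk_X_pow_mod (m : ℕ) : mk p q (X ^ m) = mk p q (X ^ (m % q)) := by
  conv_lhs => rw [← Nat.div_add_mod m q]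
  rw [pow_add, map_mul, pow_mul, map_pow, mk_X_pow_q, one_pow, one_mul]

lemma phi_add (u v : ZMod q → ZMod p) : phi p q (u + v) = phi p q u + phi p q v := by
  simp [phi, C_add, add_mul, Finset.sum_add_distrib]

lemma phi_sub (u v : ZMod q → ZMod p) : phi p q (u - v) = phi p q u - phi p q v := by
  simp [phi, sub_mul, Finset.sum_sub_distrib]

lemma phi_surjective : Function.Surjective (phi p q) := by
  intro y
  obtain ⟨P, rfl⟩ := Ideal.Quotient.mk_surjective y
  induction P using Polynomial.induction_on' with
  | add f g hf hg =>
    obtain ⟨u, hu⟩ := hf; obtain ⟨v, hv⟩ := hg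
    exact ⟨u + v, by rw [phi_add, hu, hv]; exact (map_add (mk p q) f g).symm⟩
  | monomial n c =>
    refine ⟨fun k => if k = (n : ZMod q) then c else 0, ?_⟩
    have : phi p q (fun k => if k = (n : ZMod q) then c else 0)
        = mk p q (C c * X ^ ((n : ZMod q)).val) := by
      rw [phi]
      congr 1
      rw [Finset.sum_eq_single ((n : ZMod q))]
      · simp
      · intro b _ hb; simp [hb]
      · simp
    rw [this, ZMod.val_natCast, map_mul, ← mk_X_pow_mod,
      ← C_mul_X_pow_eq_monomial]
    rw [show (Ideal.Quotient.mk (Ideal.span {(X : (ZMod p)[X]) ^ q - 1})) (C c * X ^ n)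
      = mk p q (C c * X ^ n) from rfl, map_mul]

lemma phi_injective : Function.Injective (phi p q) := by
  have key : ∀ w : ZMod q → ZMod p, phi p q w = 0 → w = 0 := by
    intro w hw
    set P : (ZMod p)[X] := ∑ k : ZMod q, C (w k) * X ^ k.val with hP
    have hdvd : ((X : (ZMod p)[X]) ^ q - 1) ∣ P :=
      Ideal.mem_span_singleton.mp (Ideal.Quotient.eq_zero_iff_mem.mp hw)
    have hq0 : 0 < q := Nat.pos_of_ne_zero (NeZero.ne q)
    have hdeg : P.degree < (q : ℕ) := by
      refine lt_of_le_of_lt (Polynomial.degree_sum_le _ _) ?_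
      rw [Finset.sup_lt_iff (by exact_mod_cast WithBot.bot_lt_coe (q : ℕ))]
      intro k _
      refine lt_of_le_of_lt (Polynomial.degree_C_mul_X_pow_le _ _) ?_
      exact_mod_cast ZMod.val_lt k
    have hP0 : P = 0 := by
      refine Polynomial.eq_zero_of_dvd_of_degree_lt hdvd ?_
      rwa [show ((X : (ZMod p)[X]) ^ q - 1) = X ^ q - C 1 by rw [map_one],
        Polynomial.degree_X_pow_sub_C hq0]
    funext k0
    have : P.coeff k0.val = w k0 := by
      rw [hP, Polynomial.finset_sum_coeff]
      simp only [Polynomial.coeff_C_mul, Polynomial.coeff_X_pow]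
      rw [Finset.sum_eq_single k0]
      · simp
      · intro b _ hb
        have hne : b.val ≠ k0.val := fun h => hb (ZMod.val_injective q h)
        simp [hne, Ne.symm hne]
      · simp
    rw [hP0] at this
    simpa using this.symm
  intro u v h
  have h2 : u - v = 0 := key _ (by rw [phi_sub, h, sub_self])
  exact sub_eq_zero.mp h2

lemma hX_mul (j k : ZMod q) :
    mk p q (X ^ (j + k).val) = mk p q (X ^ j.val) * mk p q (X ^ k.val) := by
  rw [ZMod.val_add, ← mk_X_pow_mod, pow_add, map_mul]

lemma phi_conv (x2 a : ZMod q → ZMod p) :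
    phi p q (fun i => ∑ j, a (j - i) * x2 j)
      = phi p q x2 * phi p q (fun k => a (-k)) := by
  have hL : phi p q (fun i => ∑ j, a (j - i) * x2 j)
      = ∑ j : ZMod q, ∑ i : ZMod q,
          mk p q (C (a (j - i)) * C (x2 j) * X ^ i.val) := by
    rw [phi, map_sum, Finset.sum_comm]
    refine Finset.sum_congr rfl fun i _ => ?_
    rw [map_sum C, Finset.sum_mul, map_sum]
    simp_rw [C_mul]
  have hR : phi p q x2 * phi p q (fun k => a (-k))
      = ∑ j : ZMod q, ∑ k : ZMod q,
          mk p q (C (x2 j) * X ^ j.val * (C (a (-k)) * X ^ k.val)) := by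
    rw [phi, phi, ← map_mul, Finset.sum_mul_sum, map_sum]
    refine Finset.sum_congr rfl fun j _ => map_sum _ _ _
  rw [hL, hR]
  refine Finset.sum_congr rfl fun j _ => ?_
  rw [← Equiv.sum_comp (Equiv.addLeft j)
    (fun i => mk p q (C (a (j - i)) * C (x2 j) * X ^ i.val))]
  refine Finset.sum_congr rfl fun k _ => ?_
  simp only [Equiv.coe_addLeft]
  have h1 : j - (j + k) = -k := by ring
  rw [h1, map_mul, map_mul, hX_mul, map_mul, map_mul, map_mul]
  ring


noncomputable def T (x2 : ZMod q → ZMod p) :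
    (ZMod q → ZMod p) →ₗ[ZMod p] (ZMod q → ZMod p) where
  toFun a := fun i => ∑ j, a (j - i) * x2 j
  map_add' a b := by funext i; simp [add_mul, Finset.sum_add_distrib]
  map_smul' c a := by funext i; simp [Finset.mul_sum, mul_assoc]

lemma T_apply (x2 a : ZMod q → ZMod p) :
    T x2 a = fun i => ∑ j, a (j - i) * x2 j := rfl

lemma range_T (x2 : ZMod q → ZMod p) :
    Set.range (T (p := p) (q := q) x2)
      = {v | phi p q v ∈ Ideal.span {phi p q x2}} := by
  ext v
  constructor
  · rintro ⟨a, rfl⟩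
    simp only [Set.mem_setOf_eq, T_apply]
    rw [phi_conv]
    exact Ideal.mul_mem_right _ _ (Ideal.subset_span (Set.mem_singleton _))
  · intro hv
    obtain ⟨r, hr⟩ := Ideal.mem_span_singleton'.mp hv
    obtain ⟨b, rfl⟩ := phi_surjective r
    refine ⟨fun k => b (-k), ?_⟩
    apply phi_injective
    rw [T_apply]
    have hc := phi_conv x2 (fun k => b (-k))
    simp only [neg_neg] at hc
    rw [hc, mul_comm]
    exact hr

end DCCAux

open DCCAux in
/-- for the random double circulant code with parity-check
matrix [I_q | A(a)], a uniform in (F_p)^q, and for a nonzero vector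
x = (x_L, x_R) ∈ (F_p)^{2q}: the probability that x belongs to the code is
1/|C(x_R)| if x_L ∈ C(x_R) and 0 otherwise, where C(x_R) is the cyclic code
(ideal) generated by x_R in F_p[Z]/(Z^q-1).  Probabilities over the uniform
choice of a are expressed by counting: #{a : x ∈ code(a)} · |C(x_R)| = p^q in
the first case, and #{a : x ∈ code(a)} = 0 in the second. -/
theorem prob_mem_random_double_circulant (p q : ℕ) (hp : p.Prime)
    [Fact p.Prime] [NeZero q]
    (x : (ZMod q → ZMod p) × (ZMod q → ZMod p)) (hx : x ≠ 0)
    (φ : (ZMod q → ZMod p) → (ZMod p)[X] ⧸ Ideal.span {(X : (ZMod p)[X]) ^ q - 1})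
    (hφ : φ = fun u => Ideal.Quotient.mk _ (∑ k : ZMod q, C (u k) * X ^ k.val))
    (Cx : Set (ZMod q → ZMod p))
    (hCx : Cx = {v | φ v ∈ Ideal.span {φ x.2}}) :
    (x.1 ∈ Cx →
        Nat.card {a : ZMod q → ZMod p | ∀ i, x.1 i + ∑ j, a (j - i) * x.2 j = 0}
          * Nat.card Cx = p ^ q)
    ∧ (x.1 ∉ Cx →
        Nat.card {a : ZMod q → ZMod p | ∀ i, x.1 i + ∑ j, a (j - i) * x.2 j = 0}
          = 0) := by
  have hphi : φ = phi p q := hφ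
  have hCx2 : Cx = Set.range (T (p := p) (q := q) x.2) := by
    rw [hCx, hphi, ← range_T]
  have hS : {a : ZMod q → ZMod p | ∀ i, x.1 i + ∑ j, a (j - i) * x.2 j = 0}
      = {a | T x.2 a = -x.1} := by
    ext a
    simp only [Set.mem_setOf_eq, T_apply, funext_iff, Pi.neg_apply]
    constructor
    · intro h i; linear_combination h i
    · intro h i; linear_combination h i
  constructor
  · intro hmem
    rw [hCx2] at hmem ⊢
    obtain ⟨a0, ha0⟩ := hmem
    have ha1 : T x.2 (-a0) = -x.1 := by rw [map_neg, ha0]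
    have hcardS : Nat.card {a : ZMod q → ZMod p |
        ∀ i, x.1 i + ∑ j, a (j - i) * x.2 j = 0}
        = Nat.card (LinearMap.ker (T (p := p) (q := q) x.2)) := by
      rw [hS]
      refine Nat.card_congr ⟨fun s => ⟨s.1 - (-a0), ?_⟩, fun k => ⟨-a0 + k.1, ?_⟩,
        ?_, ?_⟩
      · have hs := s.2
        simp only [Set.mem_setOf_eq] at hs
        simp [LinearMap.mem_ker, map_sub, map_add, hs, ha0, ha1]
      · have hk := k.2
        rw [LinearMap.mem_ker] at hk
        simp only [Set.mem_setOf_eq, map_add, hk, ha1, add_zero]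
      · intro s; ext1; simp
      · intro k; ext1; simp
    rw [hcardS]
    have hrange : Nat.card (Set.range (T (p := p) (q := q) x.2))
        = Nat.card (LinearMap.range (T (p := p) (q := q) x.2)) :=
      Nat.card_congr (Equiv.setCongr (LinearMap.coe_range _).symm)
    rw [hrange]
    have hquot : Nat.card ((ZMod q → ZMod p) ⧸ LinearMap.ker (T (p := p) (q := q) x.2))
        = Nat.card (LinearMap.range (T (p := p) (q := q) x.2)) :=
      Nat.card_congr (LinearMap.quotKerEquivRange (T x.2)).toEquiv
    have hcount := Submodule.card_eq_card_quotient_mul_card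
      (LinearMap.ker (T (p := p) (q := q) x.2))
    rw [hquot] at hcount
    have hcardF : Nat.card (ZMod q → ZMod p) = p ^ q := by
      simp [Nat.card_eq_fintype_card, ZMod.card]
    rw [← hcount, hcardF]
  · intro hmem
    rw [hS]
    have : {a : ZMod q → ZMod p | T x.2 a = -x.1} = ∅ := by
      ext a
      simp only [Set.mem_setOf_eq, Set.mem_empty_iff_false, iff_false]
      intro h
      apply hmem
      rw [hCx2]
      exact ⟨-a, by rw [map_neg, h, neg_neg]⟩
    rw [this]
    simp
end

section
/- Let q be prime and Q = q^2·𝔭 with 𝔭 a prime different from q. For any integer α with 1 ≤ α < q, there exist ε_1 ∈ {1,2} and ε_2 ∈ {0,1} such that r = (1 + ε_1 q)(α + ε_2 q) is coprime to Q and r ≡ α (mod q). -/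
/-- for distinct primes q and 𝔭, Q = q²𝔭, and 1 ≤ α < q, there
are ε₁ ∈ {1,2} and ε₂ ∈ {0,1} with r = (1+ε₁q)(α+ε₂q) coprime to Q and
r ≡ α (mod q). -/
theorem exists_coprime_representative (q P : ℕ) (hq : q.Prime) (hP : P.Prime)
    (hne : P ≠ q) (α : ℕ) (hα1 : 1 ≤ α) (hα2 : α < q) :
    ∃ ε₁ ∈ ({1, 2} : Set ℕ), ∃ ε₂ ∈ ({0, 1} : Set ℕ),
      Nat.Coprime ((1 + ε₁ * q) * (α + ε₂ * q)) (q ^ 2 * P)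
      ∧ (1 + ε₁ * q) * (α + ε₂ * q) ≡ α [MOD q] := by
  have hPq : ¬ P ∣ q := fun h => hne ((Nat.prime_dvd_prime_iff_eq hP hq).mp h)
  obtain ⟨ε₁, hε₁m, hε₁⟩ : ∃ ε₁ ∈ ({1, 2} : Set ℕ), ¬ P ∣ (1 + ε₁ * q) := by
    by_cases h : P ∣ (1 + 1 * q)
    · refine ⟨2, by simp, fun h2 => hPq ?_⟩
      have := Nat.dvd_sub h2 h
      have heq : (1 + 2 * q) - (1 + 1 * q) = q := by omega
      rwa [heq] at this
    · exact ⟨1, by simp, h⟩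
  obtain ⟨ε₂, hε₂m, hε₂⟩ : ∃ ε₂ ∈ ({0, 1} : Set ℕ), ¬ P ∣ (α + ε₂ * q) := by
    by_cases h : P ∣ (α + 0 * q)
    · refine ⟨1, by simp, fun h2 => hPq ?_⟩
      have := Nat.dvd_sub h2 h
      have heq : (α + 1 * q) - (α + 0 * q) = q := by omega
      rwa [heq] at this
    · exact ⟨0, by simp, h⟩
  refine ⟨ε₁, hε₁m, ε₂, hε₂m, ?_, ?_⟩
  · rw [Nat.coprime_mul_iff_right]
    constructor
    · have hcq : Nat.Coprime ((1 + ε₁ * q) * (α + ε₂ * q)) q := by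
        rw [Nat.coprime_comm, hq.coprime_iff_not_dvd]
        intro h
        rcases (Nat.Prime.dvd_mul hq).mp h with h1 | h2
        · have := Nat.dvd_sub h1 (dvd_mul_left q ε₁)
          rw [Nat.add_sub_cancel] at this
          exact absurd (Nat.le_of_dvd one_pos this) (by omega)
        · have := Nat.dvd_sub h2 (dvd_mul_left q ε₂)
          rw [Nat.add_sub_cancel] at this
          exact absurd (Nat.le_of_dvd (by omega) this) (by omega)
      exact hcq.pow_right 2
    · rw [Nat.coprime_comm, hP.coprime_iff_not_dvd]
      intro h
      rcases (Nat.Prime.dvd_mul hP).mp h with h1 | h2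
      · exact hε₁ h1
      · exact hε₂ h2
  · have h1 : 1 + ε₁ * q ≡ 1 [MOD q] := by
      simp [Nat.ModEq, Nat.add_mul_mod_self_right]
    have h2 : α + ε₂ * q ≡ α [MOD q] := by
      simp [Nat.ModEq, Nat.add_mul_mod_self_right]
    simpa using h1.mul h2
end

section
/- Let C be an [n, k] linear code over F_p whose minimum norm d (minimum Euclidean norm of integer representatives in [-(p-1)/2,(p-1)/2] of nonzero codewords) satisfies d ≤ p. Then the sphere packing determined by the Construction A lattice A_p(C) has density Δ = vol(S_n(d))/(2^n · p^{n-k}), where S_n(d) is the Euclidean ball of radius d in R^n. -/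
open MeasureTheory

private lemma sq_valMinAbs_le (p : ℕ) [NeZero p] (x : ℤ) :
    ((((x : ZMod p)).valMinAbs : ℝ)) ^ 2 ≤ ((x : ℝ)) ^ 2 := by
  have h : (((x : ZMod p)).valMinAbs) ^ 2 ≤ x ^ 2 := by
    set v := ((x : ZMod p)).valMinAbs with hv
    have hvx : (v : ZMod p) = (x : ZMod p) := ZMod.coe_valMinAbs _
    have hdvd : (p : ℤ) ∣ x - v := by
      rw [← ZMod.intCast_zmod_eq_zero_iff_dvd, Int.cast_sub, hvx, sub_self]
    obtain ⟨t, ht⟩ := hdvd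
    have hxv : x = v + p * t := by linarith
    have hvle : v.natAbs ≤ p / 2 := ZMod.natAbs_valMinAbs_le _
    have hv2 : 2 * |v| ≤ p := by
      have := Nat.div_mul_le_self p 2
      have h2 : (v.natAbs : ℤ) ≤ ((p / 2 : ℕ) : ℤ) := by exact_mod_cast hvle
      rw [Int.abs_eq_natAbs]
      have h3 : ((p / 2 : ℕ) : ℤ) * 2 ≤ (p : ℤ) := by exact_mod_cast this
      linarith
    rcases eq_or_ne t 0 with ht0 | ht0
    · simp [hxv, ht0]
    · have hpt : (p : ℤ) ≤ |(p : ℤ) * t| := by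
        rw [abs_mul]
        have : (1 : ℤ) ≤ |t| := Int.one_le_abs ht0
        have hp0 : (0 : ℤ) ≤ p := Int.natCast_nonneg p
        have : (p : ℤ) * 1 ≤ (p : ℤ) * |t| := by
          apply mul_le_mul_of_nonneg_left this hp0
        simpa [abs_of_nonneg hp0] using this
      have habs : |v| ≤ |x| := by
        have h1 : |(p : ℤ) * t| - |v| ≤ |x| := by
          calc |(p : ℤ) * t| - |v| ≤ |v + p * t| := by
                have := abs_add_le v ((p : ℤ) * t)
                have := abs_sub_abs_le_abs_sub ((p : ℤ) * t) (-v)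
                simp only [abs_neg] at this
                calc |(p : ℤ) * t| - |v| ≤ |(p : ℤ) * t - -v| := this
                  _ = |v + p * t| := by ring_nf
            _ = |x| := by rw [hxv]
        linarith
      calc v ^ 2 = |v| ^ 2 := (sq_abs v).symm
        _ ≤ |x| ^ 2 := by
            apply pow_le_pow_left₀ (abs_nonneg v) habs
        _ = x ^ 2 := sq_abs x
  calc (((x : ZMod p)).valMinAbs : ℝ) ^ 2 = (((((x : ZMod p)).valMinAbs) ^ 2 : ℤ) : ℝ) := by
        push_cast; ring
    _ ≤ (((x ^ 2 : ℤ)) : ℝ) := by exact_mod_cast h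
    _ = (x : ℝ) ^ 2 := by push_cast; ring

/-- for an [n,k] code C over F_p with minimum Euclidean norm
d ≤ p (via integer representatives in [-(p-1)/2,(p-1)/2]), the density of
the sphere packing of the Construction A lattice A_p(C) — that is,
vol(S_n(μ/2))/det(A_p(C)) where μ is the minimum norm of the lattice and the
determinant is the index of A_p(C) in Z^n — equals
vol(S_n(d))/(2^n · p^(n-k)). -/
theorem constructionA_density (p n k : ℕ) (hp : p.Prime) (hpodd : Odd p)
    (C : Submodule (ZMod p) (Fin n → ZMod p)) (hC : C ≠ ⊥)
    (hk : Module.finrank (ZMod p) C = k) (d : ℝ)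
    (hd : IsLeast {r : ℝ | ∃ c, c ∈ C ∧ c ≠ 0 ∧
        r = Real.sqrt (∑ i, (((c i).valMinAbs : ℝ)) ^ 2)} d)
    (hdp : d ≤ p) (μ : ℝ)
    (hμ : IsLeast {r : ℝ | ∃ x : Fin n → ℤ,
        (fun i => ((x i : ZMod p))) ∈ C ∧ x ≠ 0 ∧
        r = Real.sqrt (∑ i, ((x i : ℝ)) ^ 2)} μ) :
    volume (Metric.closedBall (0 : EuclideanSpace ℝ (Fin n)) (μ / 2))
        / ((AddSubgroup.comap
            (AddMonoidHom.mk' (fun x : Fin n → ℤ => fun i => ((x i : ZMod p)))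
              (by intro x y; funext i; simp))
            C.toAddSubgroup).index : ENNReal)
      = volume (Metric.closedBall (0 : EuclideanSpace ℝ (Fin n)) d)
        / ((2 : ENNReal) ^ n * (p : ENNReal) ^ (n - k)) := by
  haveI : Fact p.Prime := ⟨hp⟩
  haveI : NeZero p := ⟨hp.ne_zero⟩
  -- Step 1: μ = d
  have hμd : μ = d := by
    have h1 : μ ≤ d := by
      apply hμ.2
      obtain ⟨c, hcC, hc0, hceq⟩ := hd.1
      refine ⟨fun i => (c i).valMinAbs, ?_, ?_, ?_⟩
      · have : (fun i => (((c i).valMinAbs : ℤ) : ZMod p)) = c := by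
          funext i; exact ZMod.coe_valMinAbs _
        rw [this]; exact hcC
      · intro h
        apply hc0
        funext i
        have : (c i).valMinAbs = 0 := congrFun h i
        have := congrArg (fun z : ℤ => ((z : ZMod p))) this
        simpa [ZMod.coe_valMinAbs] using this
      · exact hceq
    have h2 : d ≤ μ := by
      obtain ⟨x, hxC, hx0, hxeq⟩ := hμ.1
      by_cases hy : (fun i => ((x i : ZMod p))) = 0
      · -- reduction is zero: all coordinates divisible by p
        have hj : ∃ j, x j ≠ 0 := by
          by_contra h
          push_neg at h
          exact hx0 (funext h)
        obtain ⟨j, hj⟩ := hj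
        have hdvd : (p : ℤ) ∣ x j := by
          have : ((x j : ZMod p)) = 0 := congrFun hy j
          exact_mod_cast (ZMod.intCast_zmod_eq_zero_iff_dvd _ _).1 this
        have hpj : (p : ℝ) ≤ |(x j : ℝ)| := by
          have : (p : ℤ) ≤ |x j| := Int.le_of_dvd (abs_pos.2 hj) (by
            rw [dvd_abs]; exact hdvd)
          calc (p : ℝ) = ((p : ℤ) : ℝ) := by norm_num
            _ ≤ ((|x j| : ℤ) : ℝ) := by exact_mod_cast this
            _ = |(x j : ℝ)| := by push_cast; rfl
        have hsum : (p : ℝ) ^ 2 ≤ ∑ i, ((x i : ℝ)) ^ 2 := by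
          calc (p : ℝ) ^ 2 ≤ |(x j : ℝ)| ^ 2 := by
                apply pow_le_pow_left₀ (by positivity) hpj
            _ = ((x j : ℝ)) ^ 2 := sq_abs _
            _ ≤ ∑ i, ((x i : ℝ)) ^ 2 := by
                apply Finset.single_le_sum (f := fun i => ((x i : ℝ)) ^ 2)
                  (fun i _ => sq_nonneg _) (Finset.mem_univ j)
        have : (p : ℝ) ≤ μ := by
          rw [hxeq]
          have := Real.sqrt_le_sqrt hsum
          rwa [Real.sqrt_sq (by positivity)] at this
        linarith
      · -- reduction is a nonzero codeword
        have hdle : d ≤ Real.sqrt (∑ i, ((((x i : ZMod p)).valMinAbs : ℝ)) ^ 2) :=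
          hd.2 ⟨fun i => ((x i : ZMod p)), hxC, hy, rfl⟩
        have hle : Real.sqrt (∑ i, ((((x i : ZMod p)).valMinAbs : ℝ)) ^ 2)
            ≤ Real.sqrt (∑ i, ((x i : ℝ)) ^ 2) := by
          apply Real.sqrt_le_sqrt
          exact Finset.sum_le_sum fun i _ => sq_valMinAbs_le p (x i)
        rw [hxeq]
        linarith
    linarith
  -- Step 2: the index equals p ^ (n - k)
  have hkn : k ≤ n := by
    rw [← hk]
    have := Submodule.finrank_le C
    simpa using this
  have hindex : (AddSubgroup.comap
      (AddMonoidHom.mk' (fun x : Fin n → ℤ => fun i => ((x i : ZMod p)))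
        (by intro x y; funext i; simp))
      C.toAddSubgroup).index = p ^ (n - k) := by
    have hsurj : Function.Surjective
        (AddMonoidHom.mk' (fun x : Fin n → ℤ => fun i => ((x i : ZMod p)))
          (by intro x y; funext i; simp)) := by
      intro c
      exact ⟨fun i => (c i).valMinAbs, by funext i; exact ZMod.coe_valMinAbs _⟩
    rw [AddSubgroup.index_comap_of_surjective _ hsurj]
    have hGcard : Nat.card (Fin n → ZMod p) = p ^ n := by
      simp [Nat.card_eq_fintype_card, ZMod.card]
    haveI : Fintype C := Fintype.ofFinite _
    have hCcard : Nat.card C = p ^ k := by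
      rw [Nat.card_eq_fintype_card]
      rw [show (Fintype.card C = Fintype.card (ZMod p) ^ Module.finrank (ZMod p) C)
        from Module.card_eq_pow_finrank, ZMod.card, hk]
    have hmul := AddSubgroup.index_mul_card C.toAddSubgroup
    rw [hGcard] at hmul
    have hCcard' : Nat.card C.toAddSubgroup = p ^ k := hCcard
    rw [hCcard'] at hmul
    have hpk : p ^ k ≠ 0 := pow_ne_zero _ hp.ne_zero
    have : C.toAddSubgroup.index * p ^ k = p ^ (n - k) * p ^ k := by
      rw [hmul, ← pow_add, Nat.sub_add_cancel hkn]
    exact Nat.eq_of_mul_eq_mul_right (Nat.pos_of_ne_zero hpk) this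
  rw [hμd, hindex]
  -- Step 3: volume computation
  have hd0 : 0 ≤ d := by
    obtain ⟨c, _, _, hceq⟩ := hd.1
    rw [hceq]; exact Real.sqrt_nonneg _
  have hdim : Module.finrank ℝ (EuclideanSpace ℝ (Fin n)) = n := by
    simp [finrank_euclideanSpace]
  have hV1 := Measure.addHaar_closedBall (volume : Measure (EuclideanSpace ℝ (Fin n)))
    (0 : EuclideanSpace ℝ (Fin n)) (r := d / 2) (by linarith)
  have hV2 := Measure.addHaar_closedBall (volume : Measure (EuclideanSpace ℝ (Fin n)))
    (0 : EuclideanSpace ℝ (Fin n)) (r := d) hd0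
  rw [hV1, hV2, hdim]
  have hof : ENNReal.ofReal ((d / 2) ^ n) = ENNReal.ofReal (d ^ n) / 2 ^ n := by
    rw [div_pow, ENNReal.ofReal_div_of_pos (by positivity)]
    congr 1
    rw [ENNReal.ofReal_pow (by norm_num)]
    norm_num
  rw [hof]
  have hcast : ((p ^ (n - k) : ℕ) : ENNReal) = (p : ENNReal) ^ (n - k) := by
    push_cast; ring
  rw [hcast]
  simp only [div_eq_mul_inv]
  rw [ENNReal.mul_inv (Or.inl (by positivity)) (Or.inl (by
    exact ENNReal.pow_ne_top ENNReal.ofNat_ne_top))]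
  ring
end
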